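/- arXiv:1202.6652 — 3 statements merged into one kernel-verified Lean document; each statement's English description precedes it below -/
import Mathlib

section
/- Let (⟨G,m⟩, p) be a minimally rigid d-periodic orbit framework on the fixed torus, i.e. it is infinitesimally rigid and |E| = d|V| - d. Then for every nonempty subset E' ⊆ E of edges, |E'| ≤ d|V(E')| - d, where V(E') denotes the set of vertices incident to at least one edge of E'. -/
open Matrix

/-- The row vector `z L ∈ ℝ^d` obtained from an integer vector `z ∈ ℤ^d` and the
lattice matrix `L`. -/
noncomputable def gainVec {d : ℕ} (L : Matrix (Fin d) (Fin d) ℝ) (z : Fin d → ℤ) :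
    Fin d → ℝ :=
  Matrix.vecMul (fun k => (z k : ℝ)) L

/-- An infinitesimal motion of the periodic orbit framework `(⟨G,m⟩,p)` on the fixed
torus with lattice matrix `L`:
`(u_{i(e)} - u_{j(e)}) · (p_{i(e)} - p_{j(e)} - m_e L) = 0` for every edge `e`. -/
def IsMotion (d : ℕ) {V E : Type*} (ie je : E → V) (m : E → Fin d → ℤ)
    (p : V → Fin d → ℝ) (L : Matrix (Fin d) (Fin d) ℝ) (u : V → Fin d → ℝ) : Prop :=
  ∀ e : E, (fun k => u (ie e) k - u (je e) k) ⬝ᵥ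
      (fun k => p (ie e) k - p (je e) k - gainVec L (m e) k) = 0

/-!
Rigidity together with the count `|E| = d|V| - d` says that the rows of the rigidity matrix are
independent: the kernel of the map sending a velocity field to its edge constraints is the
`d`-dimensional space of constant fields, so by rank–nullity the map is onto `ℝ^E`.
Independence survives deleting rows (and the columns they do not touch), so the rigidity map of
the subframework spanned by `E'` is onto as well; its kernel still contains the constants, and
rank–nullity now gives `|E'| + d ≤ d |V(E')|`.
-/

open Module Function LinearMap

lemma mem_range_const_of_forall_eq {R M ι : Type*} [Semiring R] [AddCommMonoid M] [Module R M]
    {u : ι → M} (h : ∀ i j, u i = u j) :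
    u ∈ range (LinearMap.const (R := R) (ι := ι)) := by
  rcases isEmpty_or_nonempty ι with _ | ⟨⟨i⟩⟩
  · exact ⟨0, Subsingleton.elim _ _⟩
  · exact ⟨u i, funext (h i)⟩

section RigidityMap

variable {d : ℕ} {V E : Type*} (ie je : E → V) (q : E → Fin d → ℝ)

noncomputable def rigidityMap : (V → Fin d → ℝ) →ₗ[ℝ] (E → ℝ) where
  toFun u e := (u (ie e) - u (je e)) ⬝ᵥ q e
  map_add' u v := by
    funext e
    simp only [Pi.add_apply, add_sub_add_comm, add_dotProduct]
  map_smul' c u := by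
    funext e
    simp only [Pi.smul_apply, ← smul_sub, smul_dotProduct, smul_eq_mul, RingHom.id_apply]

@[simp]
lemma rigidityMap_apply (u : V → Fin d → ℝ) (e : E) :
    rigidityMap ie je q u e = (u (ie e) - u (je e)) ⬝ᵥ q e :=
  rfl

lemma isMotion_iff_mem_ker_rigidityMap (m : E → Fin d → ℤ) (p : V → Fin d → ℝ)
    (L : Matrix (Fin d) (Fin d) ℝ) (u : V → Fin d → ℝ) :
    IsMotion d ie je m p L u ↔
      u ∈ ker (rigidityMap ie je fun e => p (ie e) - p (je e) - gainVec L (m e)) :=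
  funext_iff.symm

lemma range_const_le_ker_rigidityMap :
    range (LinearMap.const (R := ℝ) (ι := V) (M₂ := Fin d → ℝ)) ≤
      ker (rigidityMap ie je q) := by
  rintro _ ⟨c, rfl⟩
  ext e
  simp

variable {ie je q} in
lemma Function.Surjective.rigidityMap_comp {V' E' : Type*} {ie' je' : E' → V'} {f : E' → E}
    {g : V' → V} (h : Surjective (rigidityMap ie je q)) (hf : Injective f)
    (hi : ∀ e, g (ie' e) = ie (f e)) (hj : ∀ e, g (je' e) = je (f e)) :
    Surjective (rigidityMap ie' je' (q ∘ f)) := by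
  intro y
  obtain ⟨z, rfl⟩ := hf.surjective_comp_right y
  obtain ⟨u, rfl⟩ := h z
  exact ⟨u ∘ g, funext fun e => by simp [hi, hj]⟩

lemma finrank_ker_rigidityMap_le (hker : ∀ u ∈ ker (rigidityMap ie je q), ∀ v w, u v = u w) :
    finrank ℝ (ker (rigidityMap ie je q)) ≤ d :=
  calc finrank ℝ (ker (rigidityMap ie je q))
      ≤ finrank ℝ (range (LinearMap.const (R := ℝ) (ι := V) (M₂ := Fin d → ℝ))) :=
        Submodule.finrank_mono fun u hu => mem_range_const_of_forall_eq (hker u hu)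
    _ ≤ d := (finrank_range_le _).trans_eq (finrank_fin_fun ℝ)

variable [Fintype V]

lemma finrank_range_add_finrank_ker_rigidityMap :
    finrank ℝ (range (rigidityMap ie je q)) + finrank ℝ (ker (rigidityMap ie je q)) =
      d * Fintype.card V := by
  rw [finrank_range_add_finrank_ker, finrank_pi_fintype]
  simp [mul_comm]

lemma le_finrank_ker_rigidityMap [Nonempty V] : d ≤ finrank ℝ (ker (rigidityMap ie je q)) :=
  calc d = finrank ℝ (range (LinearMap.const (R := ℝ) (ι := V) (M₂ := Fin d → ℝ))) := by
        rw [finrank_range_of_inj (const_injective (α := V)), finrank_fin_fun]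
    _ ≤ finrank ℝ (ker (rigidityMap ie je q)) :=
        Submodule.finrank_mono (range_const_le_ker_rigidityMap ie je q)

variable [Fintype E]

lemma card_add_le_of_surjective_rigidityMap [Nonempty V]
    (h : Surjective (rigidityMap ie je q)) : Fintype.card E + d ≤ d * Fintype.card V := by
  have hrank := finrank_range_add_finrank_ker_rigidityMap ie je q
  rw [range_eq_top.2 h, finrank_top, finrank_fintype_fun_eq_card] at hrank
  have := le_finrank_ker_rigidityMap ie je q
  omega

lemma surjective_rigidityMap_of_ker_constant
    (hker : ∀ u ∈ ker (rigidityMap ie je q), ∀ v w, u v = u w)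
    (hcount : Fintype.card E + d ≤ d * Fintype.card V) : Surjective (rigidityMap ie je q) := by
  have hrank := finrank_range_add_finrank_ker_rigidityMap ie je q
  have := finrank_ker_rigidityMap_le ie je q hker
  rw [← range_eq_top]
  refine Submodule.eq_top_of_finrank_eq (le_antisymm (Submodule.finrank_le _) ?_)
  rw [finrank_fintype_fun_eq_card]
  omega

end RigidityMap

theorem minimally_rigid_subgraph_count_general (d : ℕ)
    (V E : Type*) [Fintype V] [Fintype E] [DecidableEq V]
    (ie je : E → V) (m : E → Fin d → ℤ) (p : V → Fin d → ℝ)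
    (L : Matrix (Fin d) (Fin d) ℝ)
    (hrigid : ∀ u : V → Fin d → ℝ, IsMotion d ie je m p L u → ∀ v w : V, u v = u w)
    (hcount : Fintype.card E = d * Fintype.card V - d) :
    ∀ E' : Finset E, E'.Nonempty →
      E'.card ≤ d * (E'.image ie ∪ E'.image je).card - d := by
  intro E' ⟨e₀, he₀⟩
  set W := E'.image ie ∪ E'.image je
  have hie : ∀ e ∈ E', ie e ∈ W := fun e he =>
    Finset.mem_union_left _ (Finset.mem_image_of_mem ie he)
  have hje : ∀ e ∈ E', je e ∈ W := fun e he =>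
    Finset.mem_union_right _ (Finset.mem_image_of_mem je he)
  have : Nonempty W := ⟨⟨ie e₀, hie e₀ he₀⟩⟩
  have hdV : d ≤ d * Fintype.card V :=
    Nat.le_mul_of_pos_right d (Fintype.card_pos_iff.2 ⟨ie e₀⟩)
  have hsurj := surjective_rigidityMap_of_ker_constant ie je _
    (fun u hu => hrigid u ((isMotion_iff_mem_ker_rigidityMap ie je m p L u).2 hu)) (by omega)
  have hsub := card_add_le_of_surjective_rigidityMap
    (fun e : E' => (⟨ie e, hie e e.2⟩ : W)) (fun e => ⟨je e, hje e e.2⟩) _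
    (hsurj.rigidityMap_comp (g := Subtype.val) Subtype.val_injective (fun _ => rfl) fun _ => rfl)
  rw [Fintype.card_coe, Fintype.card_coe] at hsub
  omega

/-- Periodic Maxwell count: if `(⟨G,m⟩,p)` is minimally rigid on the fixed torus
(infinitesimally rigid with `|E| = d|V| - d`), then every nonempty subset `E'` of edges
satisfies `|E'| ≤ d|V(E')| - d`, where `V(E')` is the set of vertices incident to `E'`. -/
theorem minimally_rigid_subgraph_count (d : ℕ) (hd : 1 ≤ d)
    (V E : Type*) [Fintype V] [Fintype E] [DecidableEq V] [DecidableEq E]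
    (ie je : E → V) (m : E → Fin d → ℤ) (p : V → Fin d → ℝ)
    (L : Matrix (Fin d) (Fin d) ℝ) (hL : IsUnit L)
    (hrigid : ∀ u : V → Fin d → ℝ, IsMotion d ie je m p L u → ∀ v w : V, u v = u w)
    (hcount : Fintype.card E = d * Fintype.card V - d) :
    ∀ E' : Finset E, E'.Nonempty →
      E'.card ≤ d * (E'.image ie ∪ E'.image je).card - d :=
  minimally_rigid_subgraph_count_general d V E ie je m p L hrigid hcount
end

section
/- Let (⟨G,m⟩, p) be a d-periodic orbit framework on the fixed torus with lattice matrix L, let B be an invertible d×d real matrix and t ∈ ℝ^d, and let A : ℝ^d → ℝ^d be the affine transformation A(x) = xB + t. Then a subset of edges of ⟨G,m⟩ is independent in the rigidity matrix computed with configuration A∘p and lattice matrix LB if and only if it is independent in the rigidity matrix computed with configuration p and lattice matrix L; in particular, rank R₀ is the same for both. -/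
/-!
The translation `t` cancels in every edge vector `p_{i(e)} - p_{j(e)} - m_e L`, and the linear
part turns it into `(p_{i(e)} - p_{j(e)} - m_e L) B`. Hence the new rigidity matrix is the old
one multiplied on the right by the invertible block diagonal matrix `1 ⊗ₖ B`, which preserves
both the linear independence of any family of rows and the rank.
-/

open Matrix

/-- The fixed torus rigidity matrix `R₀(⟨G,m⟩,p)`: the row indexed by `e` has the entries
of `p_{i(e)} - (p_{j(e)} + m_e L)` in the `d` columns of vertex `i(e)`, the entries of
`(p_{j(e)} + m_e L) - p_{i(e)}` in the `d` columns of vertex `j(e)` and zeros elsewhere;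
for a loop (`i(e) = j(e)`) the two contributions are added. -/
noncomputable def rigidityMatrix (d : ℕ) {V E : Type*} [DecidableEq V]
    (ie je : E → V) (m : E → Fin d → ℤ) (p : V → Fin d → ℝ)
    (L : Matrix (Fin d) (Fin d) ℝ) : Matrix E (V × Fin d) ℝ :=
  Matrix.of fun e vk =>
    (if vk.1 = ie e then p (ie e) vk.2 - (p (je e) vk.2 + gainVec L (m e) vk.2) else 0)
      + (if vk.1 = je e then (p (je e) vk.2 + gainVec L (m e) vk.2) - p (ie e) vk.2 else 0)

open scoped Kronecker

lemma gainVec_mul {d : ℕ} (L B : Matrix (Fin d) (Fin d) ℝ) (z : Fin d → ℤ) :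
    gainVec (L * B) z = gainVec L z ᵥ* B :=
  (vecMul_vecMul _ L B).symm

lemma rigidityMatrix_apply (d : ℕ) {V E : Type*} [DecidableEq V]
    (ie je : E → V) (m : E → Fin d → ℤ) (p : V → Fin d → ℝ)
    (L : Matrix (Fin d) (Fin d) ℝ) (e : E) (v : V) (k : Fin d) :
    rigidityMatrix d ie je m p L e (v, k) =
      ((if v = ie e then 1 else 0) - (if v = je e then 1 else 0)) *
        (p (ie e) - p (je e) - gainVec L (m e)) k := by
  simp only [rigidityMatrix, of_apply, Pi.sub_apply]
  split_ifs <;> ring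

lemma rigidityMatrix_affine (d : ℕ) {V E : Type*} [Fintype V] [DecidableEq V]
    (ie je : E → V) (m : E → Fin d → ℤ) (p : V → Fin d → ℝ)
    (L B : Matrix (Fin d) (Fin d) ℝ) (t : Fin d → ℝ) :
    rigidityMatrix d ie je m (fun v => p v ᵥ* B + t) (L * B) =
      rigidityMatrix d ie je m p L * ((1 : Matrix V V ℝ) ⊗ₖ B) := by
  ext e ⟨v, k⟩
  have hedge : (p (ie e) ᵥ* B + t) - (p (je e) ᵥ* B + t) - gainVec (L * B) (m e) =
      (p (ie e) - p (je e) - gainVec L (m e)) ᵥ* B := by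
    rw [gainVec_mul, sub_vecMul, sub_vecMul]; abel
  rw [rigidityMatrix_apply, hedge, mul_apply, Fintype.sum_prod_type, Finset.sum_eq_single v]
  · simp only [rigidityMatrix_apply, kronecker_apply, one_apply_eq, one_mul, vecMul, dotProduct,
      Finset.mul_sum, mul_assoc]
  · intro w _ hwv
    simp [one_apply_ne hwv]
  · simp

lemma linearIndependent_rows_mul_iff {ι m n K : Type*} [Field K] [Fintype n] [DecidableEq n]
    (M : Matrix m n K) {A : Matrix n n K} (hA : IsUnit A) (s : ι → m) :
    LinearIndependent K (fun i => (M * A) (s i)) ↔ LinearIndependent K (fun i => M (s i)) := by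
  have hinj : Function.Injective A.vecMulLinear := by
    rw [coe_vecMulLinear]
    exact vecMul_injective_iff_isUnit.mpr hA
  exact A.vecMulLinear.linearIndependent_iff (LinearMap.ker_eq_bot.mpr hinj)

theorem affine_invariance_general (d : ℕ)
    (V E : Type*) [Fintype V] [DecidableEq V]
    (ie je : E → V) (m : E → Fin d → ℤ) (p : V → Fin d → ℝ)
    (L B : Matrix (Fin d) (Fin d) ℝ) (hB : IsUnit B)
    (t : Fin d → ℝ) :
    (∀ S : Set E,
      (LinearIndependent ℝ fun e : S =>
        rigidityMatrix d ie je m (fun v => Matrix.vecMul (p v) B + t) (L * B) e.1) ↔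
      (LinearIndependent ℝ fun e : S => rigidityMatrix d ie je m p L e.1)) ∧
    (rigidityMatrix d ie je m (fun v => Matrix.vecMul (p v) B + t) (L * B)).rank =
      (rigidityMatrix d ie je m p L).rank := by
  have hK : IsUnit ((1 : Matrix V V ℝ) ⊗ₖ B) := isUnit_one.kronecker hB
  rw [rigidityMatrix_affine]
  exact ⟨fun S => linearIndependent_rows_mul_iff _ hK _,
    rank_mul_eq_left_of_isUnit_det _ _ ((isUnit_iff_isUnit_det _).mp hK)⟩

/-- Affine invariance of independence on the fixed torus: for the affine map
`A(x) = xB + t` (with `B` invertible), a subset of edges is independent in the rigidity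
matrix computed with configuration `A ∘ p` and lattice matrix `L * B` iff it is
independent in the rigidity matrix computed with `p` and `L`; in particular the two
rigidity matrices have the same rank. -/
theorem affine_invariance (d : ℕ) (hd : 1 ≤ d)
    (V E : Type*) [Fintype V] [Fintype E] [DecidableEq V]
    (ie je : E → V) (m : E → Fin d → ℤ) (p : V → Fin d → ℝ)
    (L B : Matrix (Fin d) (Fin d) ℝ) (hL : IsUnit L) (hB : IsUnit B)
    (t : Fin d → ℝ) :
    (∀ S : Set E,
      (LinearIndependent ℝ fun e : S =>
        rigidityMatrix d ie je m (fun v => Matrix.vecMul (p v) B + t) (L * B) e.1) ↔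
      (LinearIndependent ℝ fun e : S => rigidityMatrix d ie je m p L e.1)) ∧
    (rigidityMatrix d ie je m (fun v => Matrix.vecMul (p v) B + t) (L * B)).rank =
      (rigidityMatrix d ie je m p L).rank :=
  affine_invariance_general d V E ie je m p L B hB t
end

section
/- Let L be a d×d real matrix and let f : [0,1] → ℝ^d be any function (for a motion of a periodic orbit framework, f(t) = P_i(t) - P_j(t) for a pair of joints). If ‖f(t) - mL‖ = ‖f(0) - mL‖ for all t ∈ [0,1] and all m ∈ {-1,0,1}^d, then ‖f(t) - zL‖ = ‖f(0) - zL‖ for all t ∈ [0,1] and all z ∈ ℤ^d. In particular, a rigid motion of a periodic orbit framework on the fixed torus preserves the length of the segment {p_i, p_j; m} for every pair of vertices and every m ∈ ℤ^d. -/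
/-!
Taking `m = 0` gives `‖f t‖ = ‖f 0‖`, and then `‖f t - v‖ = ‖f 0 - v‖` is equivalent to
`⟪f t - f 0, v⟫ = 0`. So the vectors `v` at equal distance from `f t` and `f 0` form the
subspace `(ℝ ∙ (f t - f 0))ᗮ`. Taking `m` to be a standard basis vector shows that this
subspace contains every row of `L`, so it contains every vector `zL`.
-/

open Matrix

open Set Submodule RealInnerProductSpace

section Equidistant

variable {E : Type*} [NormedAddCommGroup E] [InnerProductSpace ℝ E] {x y : E}

theorem norm_sub_eq_norm_sub_iff_inner_eq_zero (hxy : ‖x‖ = ‖y‖) (v : E) :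
    ‖x - v‖ = ‖y - v‖ ↔ ⟪x - y, v⟫ = 0 := by
  rw [← sq_eq_sq₀ (norm_nonneg _) (norm_nonneg _), norm_sub_sq_real, norm_sub_sq_real,
    inner_sub_left, hxy]
  constructor <;> intro h <;> linarith

theorem norm_sub_eq_norm_sub_of_mem_span {s : Set E} (hxy : ‖x‖ = ‖y‖)
    (hs : ∀ v ∈ s, ‖x - v‖ = ‖y - v‖) {v : E} (hv : v ∈ span ℝ s) :
    ‖x - v‖ = ‖y - v‖ := by
  have hle : span ℝ s ≤ (ℝ ∙ (x - y))ᗮ := span_le.mpr fun w hw =>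
    mem_orthogonal_singleton_iff_inner_right.mpr
      ((norm_sub_eq_norm_sub_iff_inner_eq_zero hxy w).mp (hs w hw))
  exact (norm_sub_eq_norm_sub_iff_inner_eq_zero hxy v).mpr
    (mem_orthogonal_singleton_iff_inner_right.mp (hle hv))

end Equidistant

section GainVec

variable {d : ℕ} (L : Matrix (Fin d) (Fin d) ℝ)

@[simp]
theorem gainVec_zero : gainVec L 0 = 0 := by
  simp only [gainVec, Pi.zero_apply, Int.cast_zero]
  exact zero_vecMul L

@[simp]
theorem gainVec_single (k : Fin d) : gainVec L (Pi.single k 1) = L.row k := by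
  simp [gainVec, Pi.apply_single (fun _ (n : ℤ) => (n : ℝ))]

theorem toLp_gainVec_mem_span_row (z : Fin d → ℤ) :
    WithLp.toLp 2 (gainVec L z) ∈ span ℝ (range fun k => WithLp.toLp 2 (L.row k)) := by
  have hz : gainVec L z ∈ span ℝ (range L.row) := by
    rw [← range_vecMulLinear]
    exact LinearMap.mem_range_self _ _
  have := mem_map_of_mem (f := (WithLp.linearEquiv 2 ℝ (Fin d → ℝ)).symm.toLinearMap) hz
  rwa [map_span, ← range_comp] at this

end GainVec

theorem rigid_motion_preserves_all_lengths_general (d : ℕ)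
    (L : Matrix (Fin d) (Fin d) ℝ)
    (f : ℝ → EuclideanSpace ℝ (Fin d))
    (h : ∀ t ∈ Set.Icc (0 : ℝ) 1, ∀ m : Fin d → ℤ,
      (∀ k, m k = -1 ∨ m k = 0 ∨ m k = 1) →
      ‖f t - (WithLp.equiv 2 (Fin d → ℝ)).symm (gainVec L m)‖ =
        ‖f 0 - (WithLp.equiv 2 (Fin d → ℝ)).symm (gainVec L m)‖) :
    ∀ t ∈ Set.Icc (0 : ℝ) 1, ∀ z : Fin d → ℤ,
      ‖f t - (WithLp.equiv 2 (Fin d → ℝ)).symm (gainVec L z)‖ =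
        ‖f 0 - (WithLp.equiv 2 (Fin d → ℝ)).symm (gainVec L z)‖ := by
  intro t ht z
  have hnorm : ‖f t‖ = ‖f 0‖ := by
    simpa using h t ht 0 fun _ => Or.inr (Or.inl rfl)
  refine norm_sub_eq_norm_sub_of_mem_span hnorm ?_ (toLp_gainVec_mem_span_row L z)
  rintro _ ⟨k, rfl⟩
  have hsingle (j : Fin d) : (Pi.single k 1 : Fin d → ℤ) j ∈ ({-1, 0, 1} : Set ℤ) := by
    by_cases hj : j = k <;> simp [hj]
  simpa using h t ht (Pi.single k 1) hsingle

/-- If a function `f : [0,1] → ℝ^d` (e.g. `f(t) = P_i(t) - P_j(t)` for a motion of a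
periodic orbit framework) satisfies `‖f(t) - mL‖ = ‖f(0) - mL‖` for all `t ∈ [0,1]` and
all `m ∈ {-1,0,1}^d`, then `‖f(t) - zL‖ = ‖f(0) - zL‖` for all `t ∈ [0,1]` and all
`z ∈ ℤ^d`; in particular a rigid motion of a periodic orbit framework on the fixed torus
preserves the length of the segment `{p_i, p_j; m}` for every `m ∈ ℤ^d`. -/
theorem rigid_motion_preserves_all_lengths (d : ℕ) (hd : 1 ≤ d)
    (L : Matrix (Fin d) (Fin d) ℝ)
    (f : ℝ → EuclideanSpace ℝ (Fin d))
    (h : ∀ t ∈ Set.Icc (0 : ℝ) 1, ∀ m : Fin d → ℤ,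
      (∀ k, m k = -1 ∨ m k = 0 ∨ m k = 1) →
      ‖f t - (WithLp.equiv 2 (Fin d → ℝ)).symm (gainVec L m)‖ =
        ‖f 0 - (WithLp.equiv 2 (Fin d → ℝ)).symm (gainVec L m)‖) :
    ∀ t ∈ Set.Icc (0 : ℝ) 1, ∀ z : Fin d → ℤ,
      ‖f t - (WithLp.equiv 2 (Fin d → ℝ)).symm (gainVec L z)‖ =
        ‖f 0 - (WithLp.equiv 2 (Fin d → ℝ)).symm (gainVec L z)‖ :=
  rigid_motion_preserves_all_lengths_general d L f h
end
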